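/- Let 0 < λ₂ < λ₁ < 1, let f : ℝ^d → ℝ be continuously differentiable and bounded below by 0, set α(t) = (1-(1-λ₁)^t)/√(1-(1-λ₂)^t), and let (μ, v, x) : [1,∞) → ℝ^d × ℝ^d × ℝ^d solve μ̇ᵢ = -λ₁ μᵢ + λ₁ ∇ᵢf(x), v̇ᵢ = -λ₂ vᵢ + λ₂ (∇ᵢf(x))², ẋᵢ = -(1/α(t)) μᵢ/√(vᵢ) with μ(1) = 0 and vᵢ(1) > 0 for all i. Then for every coordinate i, the integrals ∫₁^∞ μᵢ(s)² vᵢ(s)^{-1/2} ds and ∫₁^∞ μᵢ(s)² vᵢ(s)^{-3/2} (∇ᵢf(x(s)))² ds are finite. -/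

import Mathlib

/-!
Write `N(t) = 1 - (1-λ₁)^t` and `D(t) = √(1 - (1-λ₂)^t)`, so that `α = N / D`, both `N` and `D`
are increasing, and `λ₁ ≤ N ≤ 1`. Dividing the energy `α f(x) + (∑ᵢ μᵢ² vᵢ^{-1/2}) / (2λ₁)` by `N`
gives the Lyapunov function `H = f(x) / D + (∑ᵢ μᵢ² vᵢ^{-1/2}) / (2λ₁ N) ≥ 0`. Along the flow the
cross terms `∇ᵢf(x) μᵢ vᵢ^{-1/2}` coming from `f(x)` and from the momenta cancel, and the
monotonicity of `N` and `D` only helps, so `H' ≤ -P / N ≤ -P` with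
`P = ∑ᵢ (1 - c) μᵢ² vᵢ^{-1/2} + c μᵢ² vᵢ^{-3/2} (∇ᵢf(x))²` and `c = λ₂ / (4λ₁) ∈ (0, 1)`.
Hence `∫₁^T P ≤ H(1)` for every `T`, and both integrands are bounded by multiples of `P`.
The denominators never vanish: `v̇ᵢ ≥ -λ₂ vᵢ` keeps `vᵢ` positive.
-/

open Real Filter MeasureTheory Set

theorem integrableOn_Ici_of_hasDerivAt_le_neg {H F : ℝ → ℝ} {a c : ℝ} (hc : 0 < c)
    (hH : ∀ t ≥ a, ∃ H', HasDerivAt H H' t ∧ c * F t ≤ -H')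
    (hH0 : ∀ t ≥ a, 0 ≤ H t) (hF : ContinuousOn F (Ici a)) (hF0 : ∀ t ≥ a, 0 ≤ F t) :
    IntegrableOn F (Ici a) := by
  choose! H' hH' hFH' using hH
  have hbound : ∀ T ≥ a, ∫ s in a..T, F s ≤ H a / c := by
    intro T hT
    have hFTC : H T - H a ≤ ∫ s in a..T, -(c * F s) :=
      intervalIntegral.sub_le_integral_of_hasDeriv_right_of_le hT
        (fun s hs => (hH' s hs.1).continuousAt.continuousWithinAt)
        (fun s hs => (hH' s hs.1.le).hasDerivWithinAt)
        ((hF.mono Icc_subset_Ici_self).integrableOn_Icc.const_mul c).neg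
        (fun s hs => le_neg.2 (hFH' s hs.1.le))
    rw [intervalIntegral.integral_neg, intervalIntegral.integral_const_mul] at hFTC
    rw [le_div_iff₀' hc]
    linarith [hH0 T hT]
  rw [integrableOn_Ici_iff_integrableOn_Ioi]
  refine integrableOn_Ioi_of_intervalIntegral_norm_bounded (H a / c) a
    (fun T => (hF.mono Icc_subset_Ici_self).integrableOn_Icc.mono_set Ioc_subset_Icc_self)
    tendsto_id ?_
  filter_upwards [eventually_ge_atTop a] with T hT
  change ∫ s in a..T, ‖F s‖ ≤ _
  rw [intervalIntegral.integral_congr fun s hs =>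
    norm_of_nonneg (hF0 s ((uIcc_of_le hT).subset hs).1)]
  exact hbound T hT

theorem pos_of_hasDerivAt_ge_neg_mul {w w' : ℝ → ℝ} {a c : ℝ}
    (hw : ∀ t ≥ a, HasDerivAt w (w' t) t) (hw' : ∀ t ≥ a, -c * w t ≤ w' t) (ha : 0 < w a) :
    ∀ t ≥ a, 0 < w t := by
  have hd : ∀ t ≥ a, HasDerivAt (fun s => exp (s * c) * w s)
      (exp (t * c) * (c * w t + w' t)) t := fun t ht =>
    ((hasDerivAt_mul_const c).exp.fun_mul (hw t ht)).congr_deriv (by ring)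
  have hmono : MonotoneOn (fun s => exp (s * c) * w s) (Ici a) :=
    monotoneOn_of_hasDerivWithinAt_nonneg (convex_Ici a)
      (fun t ht => (hd t ht).continuousAt.continuousWithinAt)
      (fun t ht => (hd t (interior_subset ht)).hasDerivWithinAt)
      (fun t ht => mul_nonneg (exp_pos _).le (by linarith [hw' t (interior_subset ht)]))
  intro t ht
  exact pos_of_mul_pos_right ((mul_pos (exp_pos _) ha).trans_le (hmono self_mem_Ici ht ht))
    (exp_pos _).le

section EuclideanSpace

variable {ι : Type*} [Fintype ι]

theorem hasDerivAt_euclideanSpace_of_apply {x : ℝ → EuclideanSpace ℝ ι} {x' : ι → ℝ} {t : ℝ}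
    (hx : ∀ i, HasDerivAt (fun s => x s i) (x' i) t) :
    HasDerivAt x (WithLp.toLp 2 x') t := by
  simpa [Function.comp_def] using
    (PiLp.hasFDerivAt_toLp (𝕜 := ℝ) 2 (fun i => x t i)).comp_hasDerivAt t (hasDerivAt_pi.2 hx)

theorem HasDerivAt.comp_euclideanSpace {f : EuclideanSpace ℝ ι → ℝ}
    {x : ℝ → EuclideanSpace ℝ ι} {x' : ι → ℝ} {t : ℝ}
    (hx : ∀ i, HasDerivAt (fun s => x s i) (x' i) t) (hf : DifferentiableAt ℝ f (x t)) :
    HasDerivAt (fun s => f (x s)) (∑ i, gradient f (x t) i * x' i) t := by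
  have := hf.hasFDerivAt.comp_hasDerivAt t (hasDerivAt_euclideanSpace_of_apply hx)
  rw [← inner_gradient_left, PiLp.inner_apply] at this
  simpa [Function.comp_def, mul_comm] using this

theorem ContDiff.continuous_gradient {f : EuclideanSpace ℝ ι → ℝ} (hf : ContDiff ℝ 1 f) :
    Continuous (gradient f) :=
  (InnerProductSpace.toDual ℝ _).symm.continuous.comp (hf.continuous_fderiv one_ne_zero)

end EuclideanSpace

noncomputable def biasCorrection (lam t : ℝ) : ℝ := 1 - (1 - lam) ^ t

section biasCorrection

variable {lam : ℝ}

theorem hasDerivAt_biasCorrection (hlam : lam < 1) (t : ℝ) :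
    HasDerivAt (biasCorrection lam) (-((1 - lam) ^ t * log (1 - lam))) t :=
  ((hasStrictDerivAt_const_rpow (by linarith) t).hasDerivAt).const_sub 1

theorem biasCorrection_deriv_nonneg (hlam₀ : 0 < lam) (hlam : lam < 1) (t : ℝ) :
    0 ≤ -((1 - lam) ^ t * log (1 - lam)) :=
  neg_nonneg.2 (mul_nonpos_of_nonneg_of_nonpos (rpow_nonneg (by linarith) t)
    (log_nonpos (by linarith) (by linarith)))

theorem le_biasCorrection (hlam₀ : 0 < lam) (hlam : lam < 1) {t : ℝ} (ht : 1 ≤ t) :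
    lam ≤ biasCorrection lam t := by
  have := rpow_le_rpow_of_exponent_ge (by linarith : 0 < 1 - lam) (by linarith) ht
  rw [rpow_one] at this
  unfold biasCorrection
  linarith

theorem biasCorrection_le_one (hlam : lam < 1) (t : ℝ) : biasCorrection lam t ≤ 1 := by
  have := rpow_pos_of_pos (by linarith : 0 < 1 - lam) t
  unfold biasCorrection
  linarith

end biasCorrection

theorem div_sqrt_eq_mul_rpow {w : ℝ} (hw : 0 ≤ w) (m : ℝ) :
    m / √w = m * w ^ (-(1 : ℝ) / 2) := by
  rw [sqrt_eq_rpow, div_eq_mul_inv, ← rpow_neg hw]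
  norm_num

theorem rpow_neg_one_half_eq_mul {w : ℝ} (hw : w ≠ 0) :
    w ^ (-(1 : ℝ) / 2) = w ^ (-(3 : ℝ) / 2) * w := by
  rw [← rpow_add_one hw]
  norm_num

noncomputable def dissipation (c m w g : ℝ) : ℝ :=
  (1 - c) * (m ^ 2 * w ^ (-(1 : ℝ) / 2)) + c * (m ^ 2 * w ^ (-(3 : ℝ) / 2) * g ^ 2)

section dissipation

variable {c m w g : ℝ}

theorem le_dissipation_left (hc : 0 ≤ c) (hw : 0 ≤ w) :
    (1 - c) * (m ^ 2 * w ^ (-(1 : ℝ) / 2)) ≤ dissipation c m w g :=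
  le_add_of_nonneg_right (by positivity)

theorem le_dissipation_right (hc : c ≤ 1) (hw : 0 ≤ w) :
    c * (m ^ 2 * w ^ (-(3 : ℝ) / 2) * g ^ 2) ≤ dissipation c m w g :=
  le_add_of_nonneg_left (mul_nonneg (by linarith) (by positivity))

theorem dissipation_nonneg (hc₀ : 0 ≤ c) (hc₁ : c ≤ 1) (hw : 0 ≤ w) :
    0 ≤ dissipation c m w g :=
  (mul_nonneg (by linarith) (by positivity)).trans (le_dissipation_left hc₀ hw)

end dissipation

theorem hasDerivAt_sq_mul_rpow_of_adam {lam₁ lam₂ g t : ℝ} {m w : ℝ → ℝ} (hlam₁ : lam₁ ≠ 0)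
    (hm : HasDerivAt m (-lam₁ * m t + lam₁ * g) t)
    (hw : HasDerivAt w (-lam₂ * w t + lam₂ * g ^ 2) t) (hwt : 0 < w t) :
    HasDerivAt (fun s => m s ^ 2 * w s ^ (-(1 : ℝ) / 2))
      (2 * lam₁ * (g * (m t * w t ^ (-(1 : ℝ) / 2)) -
        dissipation (lam₂ / (4 * lam₁)) (m t) (w t) g)) t := by
  refine ((hm.fun_pow 2).fun_mul (hw.rpow_const (Or.inl hwt.ne'))).congr_deriv ?_
  rw [show (-(1 : ℝ) / 2 - 1) = -(3 : ℝ) / 2 by norm_num, dissipation,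
    rpow_neg_one_half_eq_mul hwt.ne']
  field_simp
  ring

section Adam

variable {ι : Type*} [Fintype ι] (lam₁ lam₂ : ℝ) (f : EuclideanSpace ℝ ι → ℝ)
  (μ v x : ℝ → EuclideanSpace ℝ ι)

noncomputable def momentumEnergy (t : ℝ) : ℝ := ∑ i, μ t i ^ 2 * v t i ^ (-(1 : ℝ) / 2)

noncomputable def adamDissipation (t : ℝ) : ℝ :=
  ∑ i, dissipation (lam₂ / (4 * lam₁)) (μ t i) (v t i) (gradient f (x t) i)

noncomputable def adamLyapunov (t : ℝ) : ℝ :=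
  f (x t) / √(biasCorrection lam₂ t) + momentumEnergy μ v t / (2 * lam₁ * biasCorrection lam₁ t)

variable {lam₁ lam₂ f μ v x}

theorem momentumEnergy_nonneg {t : ℝ} (hvt : ∀ i, 0 ≤ v t i) : 0 ≤ momentumEnergy μ v t :=
  Finset.sum_nonneg fun i _ => by have := hvt i; positivity

theorem adamDissipation_nonneg (hc₀ : 0 ≤ lam₂ / (4 * lam₁)) (hc₁ : lam₂ / (4 * lam₁) ≤ 1)
    {t : ℝ} (hvt : ∀ i, 0 ≤ v t i) : 0 ≤ adamDissipation lam₁ lam₂ f μ v x t :=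
  Finset.sum_nonneg fun i _ => dissipation_nonneg hc₀ hc₁ (hvt i)

theorem dissipation_le_adamDissipation (hc₀ : 0 ≤ lam₂ / (4 * lam₁))
    (hc₁ : lam₂ / (4 * lam₁) ≤ 1) {t : ℝ} (hvt : ∀ i, 0 ≤ v t i) (i : ι) :
    dissipation (lam₂ / (4 * lam₁)) (μ t i) (v t i) (gradient f (x t) i) ≤
      adamDissipation lam₁ lam₂ f μ v x t :=
  Finset.single_le_sum (f := fun j => dissipation _ (μ t j) (v t j) (gradient f (x t) j))
    (fun j _ => dissipation_nonneg hc₀ hc₁ (hvt j)) (Finset.mem_univ i)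

theorem hasDerivAt_momentumEnergy {t : ℝ} (hlam₁ : lam₁ ≠ 0)
    (hμ : ∀ i, HasDerivAt (fun s => μ s i) (-lam₁ * μ t i + lam₁ * gradient f (x t) i) t)
    (hv : ∀ i, HasDerivAt (fun s => v s i) (-lam₂ * v t i + lam₂ * gradient f (x t) i ^ 2) t)
    (hvt : ∀ i, 0 < v t i) :
    HasDerivAt (momentumEnergy μ v) (2 * lam₁ *
      (∑ i, gradient f (x t) i * (μ t i * v t i ^ (-(1 : ℝ) / 2)) -
        adamDissipation lam₁ lam₂ f μ v x t)) t := by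
  refine (HasDerivAt.fun_sum (u := Finset.univ) fun i _ =>
    hasDerivAt_sq_mul_rpow_of_adam hlam₁ (hμ i) (hv i) (hvt i)).congr_deriv ?_
  simp only [adamDissipation, ← Finset.mul_sum, ← Finset.sum_sub_distrib]

theorem adamLyapunov_nonneg (hlam₁₀ : 0 < lam₁) (hlam₁ : lam₁ < 1) (hf0 : ∀ y, 0 ≤ f y)
    {t : ℝ} (ht : 1 ≤ t) (hvt : ∀ i, 0 ≤ v t i) :
    0 ≤ adamLyapunov lam₁ lam₂ f μ v x t := by
  have := hlam₁₀.trans_le (le_biasCorrection hlam₁₀ hlam₁ ht)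
  have := momentumEnergy_nonneg (μ := μ) hvt
  have := hf0 (x t)
  unfold adamLyapunov
  positivity

theorem exists_hasDerivAt_adamLyapunov_le (hlam₂ : 0 < lam₂) (hlam₁₂ : lam₂ < lam₁)
    (hlam₁ : lam₁ < 1) (hf0 : ∀ y, 0 ≤ f y) {t α : ℝ} (ht : 1 ≤ t)
    (hα : α = biasCorrection lam₁ t / √(biasCorrection lam₂ t))
    (hf : DifferentiableAt ℝ f (x t))
    (hμ : ∀ i, HasDerivAt (fun s => μ s i) (-lam₁ * μ t i + lam₁ * gradient f (x t) i) t)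
    (hv : ∀ i, HasDerivAt (fun s => v s i) (-lam₂ * v t i + lam₂ * gradient f (x t) i ^ 2) t)
    (hx : ∀ i, HasDerivAt (fun s => x s i) (-(1 / α) * (μ t i / √(v t i))) t)
    (hvt : ∀ i, 0 < v t i) :
    ∃ H', HasDerivAt (adamLyapunov lam₁ lam₂ f μ v x) H' t ∧
      adamDissipation lam₁ lam₂ f μ v x t ≤ -H' := by
  have hlam₁₀ : 0 < lam₁ := hlam₂.trans hlam₁₂
  set N := biasCorrection lam₁ t with hN_def
  set D := √(biasCorrection lam₂ t) with hD_def
  set N' := -((1 - lam₁) ^ t * log (1 - lam₁)) with hN'_def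
  set B' := -((1 - lam₂) ^ t * log (1 - lam₂)) with hB'_def
  set G := ∑ i, gradient f (x t) i * (μ t i * v t i ^ (-(1 : ℝ) / 2)) with hG_def
  set P := adamDissipation lam₁ lam₂ f μ v x t with hP_def
  set S := momentumEnergy μ v t
  have hN0 : 0 < N := hlam₁₀.trans_le (le_biasCorrection hlam₁₀ hlam₁ ht)
  have hB : 0 < biasCorrection lam₂ t :=
    hlam₂.trans_le (le_biasCorrection hlam₂ (hlam₁₂.trans hlam₁) ht)
  have hD : 0 < D := sqrt_pos.2 hB
  have hfx : HasDerivAt (fun s => f (x s)) (-(D / N) * G) t := by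
    refine (HasDerivAt.comp_euclideanSpace hx hf).congr_deriv ?_
    simp only [G, hα, one_div_div, Finset.mul_sum, div_sqrt_eq_mul_rpow (hvt _).le]
    exact Finset.sum_congr rfl fun i _ => by ring
  have hN' := biasCorrection_deriv_nonneg hlam₁₀ hlam₁ t
  have hB' := biasCorrection_deriv_nonneg hlam₂ (hlam₁₂.trans hlam₁) t
  have hP : 0 ≤ P := adamDissipation_nonneg (by positivity)
    (div_le_one_of_le₀ (by linarith) (by positivity)) fun i => (hvt i).le
  refine ⟨_, (hfx.div ((hasDerivAt_biasCorrection (hlam₁₂.trans hlam₁) t).sqrt hB.ne') hD.ne').add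
    ((hasDerivAt_momentumEnergy hlam₁₀.ne' hμ hv hvt).div
      ((hasDerivAt_biasCorrection hlam₁ t).const_mul (2 * lam₁)) (by positivity)), ?_⟩
  rw [← hD_def, ← hN_def, ← hN'_def, ← hB'_def, ← hG_def, ← hP_def]
  calc P ≤ P / N + (f (x t) * (B' / (2 * D)) / D ^ 2 + S * N' / (2 * lam₁ * N ^ 2)) := by
        have := hf0 (x t)
        have := momentumEnergy_nonneg (μ := μ) fun i => (hvt i).le
        have := le_div_self hP hN0 (biasCorrection_le_one hlam₁ t)
        have : 0 ≤ f (x t) * (B' / (2 * D)) / D ^ 2 + S * N' / (2 * lam₁ * N ^ 2) := by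
          positivity
        linarith
    _ = _ := by -- the cross terms `± G / N` cancel
        field_simp
        ring

end Adam

theorem adam_dissipation_integrable_general
    (d : ℕ) (lam₁ lam₂ : ℝ)
    (hlam₂ : 0 < lam₂) (hlam₁₂ : lam₂ < lam₁) (hlam₁ : lam₁ < 1)
    (f : EuclideanSpace ℝ (Fin d) → ℝ)
    (hf : ContDiff ℝ 1 f) (hf0 : ∀ y, 0 ≤ f y)
    (α : ℝ → ℝ)
    (hα : ∀ t : ℝ, α t = (1 - (1 - lam₁) ^ t) / Real.sqrt (1 - (1 - lam₂) ^ t))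
    (μ v x : ℝ → EuclideanSpace ℝ (Fin d))
    (hμ : ∀ t ≥ (1 : ℝ), ∀ i : Fin d, HasDerivAt (fun s => μ s i)
      (-lam₁ * μ t i + lam₁ * gradient f (x t) i) t)
    (hv : ∀ t ≥ (1 : ℝ), ∀ i : Fin d, HasDerivAt (fun s => v s i)
      (-lam₂ * v t i + lam₂ * (gradient f (x t) i) ^ 2) t)
    (hx : ∀ t ≥ (1 : ℝ), ∀ i : Fin d, HasDerivAt (fun s => x s i)
      (-(1 / α t) * (μ t i / Real.sqrt (v t i))) t)
    (hv1 : ∀ i : Fin d, 0 < v 1 i) :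
    ∀ i : Fin d,
      IntegrableOn (fun s => μ s i ^ 2 * v s i ^ (-(1 : ℝ) / 2)) (Set.Ici 1) ∧
      IntegrableOn (fun s => μ s i ^ 2 * v s i ^ (-(3 : ℝ) / 2) * (gradient f (x s) i) ^ 2)
        (Set.Ici 1) := by
  intro i
  have hlam₁₀ : 0 < lam₁ := hlam₂.trans hlam₁₂
  have hc₀ : 0 < lam₂ / (4 * lam₁) := by positivity
  have hc₁ : lam₂ / (4 * lam₁) < 1 := (div_lt_one (by positivity)).2 (by linarith)
  have hvpos : ∀ t ≥ (1 : ℝ), ∀ j, 0 < v t j := fun t ht j =>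
    pos_of_hasDerivAt_ge_neg_mul (fun s hs => hv s hs j)
      (fun s _ => le_add_of_nonneg_right (by positivity)) (hv1 j) t ht
  have hlyap0 := fun t (ht : t ≥ 1) => adamLyapunov_nonneg (lam₂ := lam₂) (μ := μ) (x := x)
    hlam₁₀ hlam₁ hf0 ht fun j => (hvpos t ht j).le
  have hlyap {F : ℝ → ℝ} {c : ℝ} (hF : ∀ t ≥ (1 : ℝ), c * F t ≤
      dissipation (lam₂ / (4 * lam₁)) (μ t i) (v t i) (gradient f (x t) i)) :
      ∀ t ≥ (1 : ℝ), ∃ H', HasDerivAt (adamLyapunov lam₁ lam₂ f μ v x) H' t ∧ c * F t ≤ -H' :=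
    fun t ht => (exists_hasDerivAt_adamLyapunov_le hlam₂ hlam₁₂ hlam₁ hf0 ht (hα t)
      ((hf.differentiable one_ne_zero) (x t)) (hμ t ht) (hv t ht) (hx t ht) (hvpos t ht)).imp
      fun _ h => ⟨h.1, ((hF t ht).trans (dissipation_le_adamDissipation hc₀.le hc₁.le
        (fun j => (hvpos t ht j).le) i)).trans h.2⟩
  have hμc : ContinuousOn (fun s => μ s i) (Ici 1) :=
    fun t ht => (hμ t ht i).continuousAt.continuousWithinAt
  have hrpow (p : ℝ) : ContinuousOn (fun s => v s i ^ p) (Ici 1) := fun t ht =>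
    ((hv t ht i).continuousAt.rpow_const (Or.inl (hvpos t ht i).ne')).continuousWithinAt
  have hgc : ContinuousOn (fun s => gradient f (x s) i) (Ici 1) :=
    ((PiLp.continuous_apply 2 _ i).comp hf.continuous_gradient).comp_continuousOn
      fun t ht => (hasDerivAt_euclideanSpace_of_apply (hx t ht)).continuousAt.continuousWithinAt
  exact ⟨integrableOn_Ici_of_hasDerivAt_le_neg (sub_pos.2 hc₁)
      (hlyap fun t ht => le_dissipation_left hc₀.le (hvpos t ht i).le) hlyap0
      ((hμc.pow 2).mul (hrpow _)) fun t ht => by have := hvpos t ht i; positivity,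
    integrableOn_Ici_of_hasDerivAt_le_neg hc₀
      (hlyap fun t ht => le_dissipation_right hc₁.le (hvpos t ht i).le) hlyap0
      (((hμc.pow 2).mul (hrpow _)).mul (hgc.pow 2)) fun t ht => by
        have := hvpos t ht i; positivity⟩

/-- Dissipation integrability for continuous-time Adam: for every coordinate
`i`, the integrals `∫₁^∞ μᵢ² vᵢ^{-1/2}` and `∫₁^∞ μᵢ² vᵢ^{-3/2} (∇ᵢf(x))²`
are finite. -/
theorem adam_dissipation_integrable
    (d : ℕ) (lam₁ lam₂ : ℝ)
    (hlam₂ : 0 < lam₂) (hlam₁₂ : lam₂ < lam₁) (hlam₁ : lam₁ < 1)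
    (f : EuclideanSpace ℝ (Fin d) → ℝ)
    (hf : ContDiff ℝ 1 f) (hf0 : ∀ y, 0 ≤ f y)
    (α : ℝ → ℝ)
    (hα : ∀ t : ℝ, α t = (1 - (1 - lam₁) ^ t) / Real.sqrt (1 - (1 - lam₂) ^ t))
    (μ v x : ℝ → EuclideanSpace ℝ (Fin d))
    (hμ : ∀ t ≥ (1 : ℝ), ∀ i : Fin d, HasDerivAt (fun s => μ s i)
      (-lam₁ * μ t i + lam₁ * gradient f (x t) i) t)
    (hv : ∀ t ≥ (1 : ℝ), ∀ i : Fin d, HasDerivAt (fun s => v s i)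
      (-lam₂ * v t i + lam₂ * (gradient f (x t) i) ^ 2) t)
    (hx : ∀ t ≥ (1 : ℝ), ∀ i : Fin d, HasDerivAt (fun s => x s i)
      (-(1 / α t) * (μ t i / Real.sqrt (v t i))) t)
    (hμ1 : μ 1 = 0) (hv1 : ∀ i : Fin d, 0 < v 1 i) :
    ∀ i : Fin d,
      IntegrableOn (fun s => μ s i ^ 2 * v s i ^ (-(1 : ℝ) / 2)) (Set.Ici 1) ∧
      IntegrableOn (fun s => μ s i ^ 2 * v s i ^ (-(3 : ℝ) / 2) * (gradient f (x s) i) ^ 2)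
        (Set.Ici 1) :=
  adam_dissipation_integrable_general d lam₁ lam₂ hlam₂ hlam₁₂ hlam₁ f hf hf0 α hα μ v x hμ hv hx
    hv1
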